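/- arXiv:0707.0837 — 6 statements merged into one kernel-verified Lean document; each statement's English description precedes it below -/
import Mathlib

section
/- Let N be a positive integer, let δ ∈ (0,1), set θ = 9/(8 ln(2/δ)), and for k = 0,1,...,N define ℒ(k) = k/N + (3/4)·(1 − 2k/N − √(1 + 4θk(1 − k/N)))/(1 + θN) and 𝒰(k) = k/N + (3/4)·(1 − 2k/N + √(1 + 4θk(1 − k/N)))/(1 + θN). Then for every p ∈ (0,1), the probability that a Binomial(N,p) random variable K satisfies ℒ(K) < p < 𝒰(K) exceeds 1 − δ; that is, ∑_{k=0}^{N} [ℒ(k) < p and p < 𝒰(k)] · C(N,k) p^k (1−p)^(N−k) > 1 − δ. -/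
/-!
Write `a = log (2 / δ)`, `x = k / N` and `m = (x + 2p) / 3`. Squaring out the square root shows
that `p` misses the interval `(ℒ(k), 𝒰(k))` exactly when `2 a m (1 - m) ≤ N (x - p)²`, i.e. when
`a ≤ N (x - p)² / (2 m (1 - m))`. This quadratic expression is a strict lower bound for the
Bernoulli relative entropy `KL(x ‖ p)`: their difference vanishes at `p = x` and is strictly
decreasing in `p`. The misses above `p` all lie in the upper tail cut at the smallest of them, and
the Chernoff bound `P(K ≥ N x) ≤ exp (-N KL(x ‖ p))` gives them probability `< exp (-a) = δ / 2`.
The misses below `p` are the misses above `1 - p` for `N - K`, which is Binomial(N, 1 - p).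
-/

open Real Finset

noncomputable def bernoulliKL (x p : ℝ) : ℝ :=
  x * (log x - log p) + (1 - x) * (log (1 - x) - log (1 - p))

noncomputable def binomWeight (N : ℕ) (p : ℝ) (k : ℕ) : ℝ :=
  N.choose k * p ^ k * (1 - p) ^ (N - k)

lemma binomWeight_nonneg {N : ℕ} {p : ℝ} (hp0 : 0 ≤ p) (hp1 : p ≤ 1) (k : ℕ) :
    0 ≤ binomWeight N p k := by
  have := sub_nonneg.2 hp1
  unfold binomWeight
  positivity

lemma sum_binomWeight_mul_pow (N : ℕ) (p r : ℝ) :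
    ∑ k ∈ range (N + 1), binomWeight N p k * r ^ k = (p * r + (1 - p)) ^ N := by
  rw [add_pow]
  refine sum_congr rfl fun k _ => ?_
  unfold binomWeight
  ring

lemma sum_binomWeight (N : ℕ) (p : ℝ) : ∑ k ∈ range (N + 1), binomWeight N p k = 1 := by
  simpa using sum_binomWeight_mul_pow N p 1

lemma binomWeight_one_sub {N k : ℕ} (p : ℝ) (hk : k ≤ N) :
    binomWeight N (1 - p) (N - k) = binomWeight N p k := by
  rw [binomWeight, binomWeight, Nat.choose_symm hk, Nat.sub_sub_self hk, sub_sub_cancel]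
  ring

lemma sum_binomWeight_ge_le_exp_mul {N : ℕ} {p t : ℝ} (hp0 : 0 ≤ p) (hp1 : p ≤ 1)
    (ht : 0 ≤ t) (s : ℝ) :
    ∑ k ∈ (range (N + 1)).filter (fun k : ℕ => s ≤ k), binomWeight N p k
      ≤ exp (-(t * s)) * (p * exp t + (1 - p)) ^ N := by
  rw [← sum_binomWeight_mul_pow, mul_sum, sum_filter]
  refine sum_le_sum fun k _ => ?_
  have hw := binomWeight_nonneg (N := N) hp0 hp1 k
  split_ifs with hk
  · have : 1 ≤ exp (-(t * s)) * exp t ^ k := by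
      rw [← exp_nat_mul, ← exp_add]
      exact one_le_exp (by nlinarith)
    nlinarith
  · positivity

lemma sum_binomWeight_ge_le_exp_bernoulliKL {N : ℕ} {p x : ℝ} (hp : 0 < p) (hpx : p < x)
    (hx : x ≤ 1) :
    ∑ k ∈ (range (N + 1)).filter (fun k : ℕ => N * x ≤ k), binomWeight N p k
      ≤ exp (-(N * bernoulliKL x p)) := by
  rcases hx.lt_or_eq with hx | rfl
  · have h1x : 0 < 1 - x := by linarith
    have h1p : 0 < 1 - p := by linarith
    set t := log x + log (1 - p) - log p - log (1 - x) with ht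
    have hexp : exp t = x * (1 - p) / (p * (1 - x)) := by
      rw [ht, exp_sub, exp_sub, exp_add, exp_log (by linarith), exp_log h1p, exp_log hp,
        exp_log h1x]
      field_simp
    have hmgf : p * exp t + (1 - p) = exp (log (1 - p) - log (1 - x)) := by
      rw [hexp, exp_sub, exp_log h1p, exp_log h1x]
      field_simp
      ring
    have ht0 : 0 ≤ t := by
      rw [← exp_le_exp, exp_zero, hexp, one_le_div (by positivity)]
      nlinarith
    refine (sum_binomWeight_ge_le_exp_mul hp.le (by linarith) ht0 _).trans_eq ?_
    rw [hmgf, ← exp_nat_mul, ← exp_add, bernoulliKL, ht]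
    ring_nf
  · have hfilter : (range (N + 1)).filter (fun k : ℕ => (N : ℝ) * 1 ≤ k) = {N} := by
      ext k
      simp only [mem_filter, mem_range, mul_one, Nat.cast_le, mem_singleton]
      omega
    have hKL : -((N : ℝ) * bernoulliKL 1 p) = N * log p := by simp [bernoulliKL]
    rw [hfilter, sum_singleton, hKL, exp_nat_mul, exp_log hp]
    simp [binomWeight]

noncomputable def klQuadBound (x p : ℝ) : ℝ :=
  (x - p) ^ 2 / (2 * ((x + 2 * p) / 3 * (1 - (x + 2 * p) / 3)))

lemma klQuadBound_self (p : ℝ) : klQuadBound p p = 0 := by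
  simp [klQuadBound]

lemma klQuadBound_one_sub (x p : ℝ) : klQuadBound (1 - x) (1 - p) = klQuadBound x p := by
  unfold klQuadBound
  ring_nf

lemma hasDerivAt_bernoulliKL_right (x : ℝ) {y : ℝ} (hy0 : 0 < y) (hy1 : y < 1) :
    HasDerivAt (bernoulliKL x) ((y - x) / (y * (1 - y))) y := by
  have h1 := ((hasDerivAt_log hy0.ne').const_sub (log x)).const_mul x
  have h2 := ((((hasDerivAt_id y).const_sub 1).log (by simp; linarith)).const_sub
    (log (1 - x))).const_mul (1 - x)
  refine (h1.add h2).congr_deriv ?_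
  have : 1 - y ≠ 0 := by linarith
  simp only [id]
  field_simp
  ring

lemma hasDerivAt_klQuadBound {x y m : ℝ} (hm : (x + 2 * y) / 3 = m) (hm0 : 0 < m)
    (hm1 : m < 1) :
    HasDerivAt (klQuadBound x)
      (-(x - y) * (m * (1 - m) + (m - y) * (1 - 2 * m)) / (m ^ 2 * (1 - m) ^ 2)) y := by
  have hw : HasDerivAt (fun y => (x + 2 * y) / 3) (2 / 3) y := by
    simpa using (((hasDerivAt_id y).const_mul 2).const_add x).div_const 3
  have hden : HasDerivAt (fun y => 2 * ((x + 2 * y) / 3 * (1 - (x + 2 * y) / 3)))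
      (2 * (2 / 3 * (1 - m) + m * -(2 / 3))) y := by
    rw [← hm]; exact (hw.mul (hw.const_sub 1)).const_mul 2
  have hnum : HasDerivAt (fun y => (x - y) ^ 2) (2 * (x - y) ^ 1 * -1) y :=
    ((hasDerivAt_id y).const_sub x).pow 2
  have h1m : 1 - m ≠ 0 := by linarith
  refine (hnum.div hden (by rw [hm]; positivity)).congr_deriv ?_
  rw [hm]
  field_simp
  rw [show x = 3 * m - 2 * y by linarith]
  ring

lemma bernoulliKL_sub_klQuadBound_deriv_neg {x y m : ℝ} (hm : (x + 2 * y) / 3 = m)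
    (hy0 : 0 < y) (hym : y < m) (hm1 : m < 1) :
    (y - x) / (y * (1 - y))
      - -(x - y) * (m * (1 - m) + (m - y) * (1 - 2 * m)) / (m ^ 2 * (1 - m) ^ 2) < 0 := by
  obtain rfl : x = 3 * m - 2 * y := by linarith
  have hy1 : 0 < 1 - y := by linarith
  have h1m : 0 < 1 - m := by linarith
  have hm0 : 0 < m := by linarith
  have hfactor : 0 < (1 - m) ^ 2 - y * (1 - 2 * m) := by
    nlinarith [mul_pos hy0 hm0, mul_pos h1m hm0]
  have key : (y - (3 * m - 2 * y)) / (y * (1 - y))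
      - -(3 * m - 2 * y - y) * (m * (1 - m) + (m - y) * (1 - 2 * m)) / (m ^ 2 * (1 - m) ^ 2)
      = -(3 * (m - y) ^ 3 * ((1 - m) ^ 2 - y * (1 - 2 * m)))
          / (y * (1 - y) * (m ^ 2 * (1 - m) ^ 2)) := by
    field_simp
    ring
  rw [key]
  exact div_neg_of_neg_of_pos (by have := sub_pos.2 hym; nlinarith [pow_pos this 3]) (by positivity)

lemma nine_mul_div_lt_neg_log {p : ℝ} (hp0 : 0 < p) (hp1 : p < 1) :
    9 * (1 - p) / (4 * (1 + 2 * p)) < -log p := by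
  let g : ℝ → ℝ := fun y => -log y - 9 * (1 - y) / (4 * (1 + 2 * y))
  have hg : ∀ y, 0 < y →
      HasDerivAt g (-(4 * (16 * y ^ 2 - 11 * y + 4)) / (y * (4 * (1 + 2 * y)) ^ 2)) y := by
    intro y hy
    have hden : 4 * (1 + 2 * y) ≠ 0 := by positivity
    have hrat : HasDerivAt (fun y => 9 * (1 - y) / (4 * (1 + 2 * y)))
        ((9 * -1 * (4 * (1 + 2 * y)) - 9 * (1 - y) * (4 * (2 * 1))) / (4 * (1 + 2 * y)) ^ 2) y :=
      (((hasDerivAt_id y).const_sub 1).const_mul 9).div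
        ((((hasDerivAt_id y).const_mul 2).const_add 1).const_mul 4) hden
    refine ((hasDerivAt_log hy.ne').neg.sub hrat).congr_deriv ?_
    field_simp
    ring
  have hanti : StrictAntiOn g (Set.Icc p 1) := by
    refine strictAntiOn_of_deriv_neg (convex_Icc p 1)
      (fun y hy => (hg y (hp0.trans_le hy.1)).continuousAt.continuousWithinAt) fun y hy => ?_
    rw [interior_Icc] at hy
    have hy0 : 0 < y := hp0.trans hy.1
    rw [(hg y hy0).deriv]
    exact div_neg_of_neg_of_pos (by nlinarith [sq_nonneg (32 * y - 11)]) (by positivity)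
  have := hanti ⟨le_rfl, hp1.le⟩ ⟨hp1.le, le_rfl⟩ hp1
  simp only [g, log_one, sub_self, mul_zero, zero_div, neg_zero] at this
  linarith

lemma klQuadBound_lt_bernoulliKL {x p : ℝ} (hp : 0 < p) (hpx : p < x) (hx : x ≤ 1) :
    klQuadBound x p < bernoulliKL x p := by
  rcases hx.lt_or_eq with hx1 | rfl
  · let g : ℝ → ℝ := fun y => bernoulliKL x y - klQuadBound x y
    have hg : ∀ y ∈ Set.Icc p x, ∃ d, HasDerivAt g d y ∧ (y < x → d < 0) := by
      rintro y ⟨hpy, hyx⟩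
      have hy0 : 0 < y := hp.trans_le hpy
      exact ⟨_, (hasDerivAt_bernoulliKL_right x hy0 (by linarith)).sub
        (hasDerivAt_klQuadBound rfl (by linarith) (by linarith)),
        fun hyx' => bernoulliKL_sub_klQuadBound_deriv_neg rfl hy0 (by linarith) (by linarith)⟩
    have hanti : StrictAntiOn g (Set.Icc p x) := by
      refine strictAntiOn_of_deriv_neg (convex_Icc p x)
        (fun y hy => (hg y hy).choose_spec.1.continuousAt.continuousWithinAt) fun y hy => ?_
      rw [interior_Icc] at hy
      obtain ⟨d, hd, hneg⟩ := hg y (Set.Ioo_subset_Icc_self hy)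
      rw [hd.deriv]
      exact hneg hy.2
    have := hanti ⟨le_rfl, hpx.le⟩ ⟨hpx.le, le_rfl⟩ hpx
    simpa [g, bernoulliKL, klQuadBound] using this
  · have hQ : klQuadBound 1 p = 9 * (1 - p) / (4 * (1 + 2 * p)) := by
      unfold klQuadBound
      rw [div_eq_div_iff (by nlinarith) (by linarith)]
      ring
    simpa [hQ, bernoulliKL] using nine_mul_div_lt_neg_log hp hpx

lemma sum_binomWeight_ge_lt_exp {N : ℕ} {p x a : ℝ} (hN : 0 < N) (hp : 0 < p) (hpx : p < x)
    (hx : x ≤ 1) (ha : a ≤ N * klQuadBound x p) :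
    ∑ k ∈ (range (N + 1)).filter (fun k : ℕ => N * x ≤ k), binomWeight N p k < exp (-a) := by
  refine (sum_binomWeight_ge_le_exp_bernoulliKL hp hpx hx).trans_lt (exp_lt_exp.2 ?_)
  have := mul_lt_mul_of_pos_left (klQuadBound_lt_bernoulliKL hp hpx hx)
    (Nat.cast_pos.2 hN : (0 : ℝ) < N)
  linarith

lemma sum_binomWeight_lt_exp_of_forall_gt {N : ℕ} {p a : ℝ} (hN : 0 < N) (hp : 0 < p)
    {S : Finset ℕ} (hS : S ⊆ range (N + 1))
    (hfar : ∀ k ∈ S, p < k / N ∧ a ≤ N * klQuadBound (k / N) p) :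
    ∑ k ∈ S, binomWeight N p k < exp (-a) := by
  rcases S.eq_empty_or_nonempty with rfl | hne
  · simpa using exp_pos (-a)
  have hNr : (0 : ℝ) < N := Nat.cast_pos.2 hN
  set k₀ := S.min' hne
  obtain ⟨hpk, hak⟩ := hfar k₀ (S.min'_mem hne)
  have hk₀ : (k₀ : ℝ) / N ≤ 1 :=
    div_le_one_of_le₀ (by exact_mod_cast mem_range_succ_iff.1 (hS (S.min'_mem hne))) hNr.le
  calc ∑ k ∈ S, binomWeight N p k
      ≤ ∑ k ∈ (range (N + 1)).filter (fun k : ℕ => N * (k₀ / N : ℝ) ≤ k), binomWeight N p k := by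
        refine sum_le_sum_of_subset_of_nonneg (fun k hk => mem_filter.2 ⟨hS hk, ?_⟩)
          fun k _ _ => binomWeight_nonneg hp.le (by linarith) k
        rw [mul_div_cancel₀ _ hNr.ne']
        exact_mod_cast S.min'_le k hk
    _ < exp (-a) := sum_binomWeight_ge_lt_exp hN hp hpk hk₀ hak

lemma sum_binomWeight_lt_exp_of_forall_lt {N : ℕ} {p a : ℝ} (hN : 0 < N) (hp : p < 1)
    {S : Finset ℕ} (hS : S ⊆ range (N + 1))
    (hfar : ∀ k ∈ S, k / N < p ∧ a ≤ N * klQuadBound (k / N) p) :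
    ∑ k ∈ S, binomWeight N p k < exp (-a) := by
  have hkN : ∀ k ∈ S, k ≤ N := fun k hk => mem_range_succ_iff.1 (hS hk)
  have hinj : Set.InjOn (N - ·) S := fun i hi j hj hij => by
    have := hkN i hi; have := hkN j hj; simp only at hij; omega
  have hreflect := sum_binomWeight_lt_exp_of_forall_gt (a := a) hN (sub_pos.2 hp)
    (S := S.image (N - ·)) (fun j hj => by
      obtain ⟨k, -, rfl⟩ := mem_image.1 hj
      exact mem_range_succ_iff.2 (N.sub_le k)) (fun j hj => by
      obtain ⟨k, hk, rfl⟩ := mem_image.1 hj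
      have hNr : (N : ℝ) ≠ 0 := by exact_mod_cast hN.ne'
      rw [Nat.cast_sub (hkN k hk), sub_div, div_self hNr, klQuadBound_one_sub]
      exact ⟨by linarith [(hfar k hk).1], (hfar k hk).2⟩)
  rwa [sum_image hinj, sum_congr rfl fun k hk => binomWeight_one_sub p (hkN k hk)] at hreflect

lemma sum_binomWeight_lt_two_mul_exp {N : ℕ} {p a : ℝ} (hN : 0 < N) (hp0 : 0 < p) (hp1 : p < 1)
    (ha : 0 < a) {S : Finset ℕ} (hS : S ⊆ range (N + 1))
    (hfar : ∀ k ∈ S, a ≤ N * klQuadBound (k / N) p) :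
    ∑ k ∈ S, binomWeight N p k < 2 * exp (-a) := by
  rw [← sum_filter_add_sum_filter_not S (fun k : ℕ => p < k / N), two_mul]
  refine add_lt_add
    (sum_binomWeight_lt_exp_of_forall_gt hN hp0 ((filter_subset _ _).trans hS) fun k hk => ?_)
    (sum_binomWeight_lt_exp_of_forall_lt hN hp1 ((filter_subset _ _).trans hS) fun k hk => ?_)
  · obtain ⟨hkS, hpk⟩ := mem_filter.1 hk
    exact ⟨hpk, hfar k hkS⟩
  · obtain ⟨hkS, hpk⟩ := mem_filter.1 hk
    refine ⟨(not_lt.1 hpk).lt_of_ne fun heq => ?_, hfar k hkS⟩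
    have := ha.trans_le (hfar k hkS)
    rw [heq, klQuadBound_self, mul_zero] at this
    exact this.false

lemma nine_mul_le_of_not_mem_interval {w x p : ℝ} (hw : 0 ≤ w) (hx0 : 0 ≤ x) (hx1 : x ≤ 1)
    (h : ¬(x + 3 / 4 * ((1 - 2 * x - √(1 + 4 * w * x * (1 - x))) / (1 + w)) < p ∧
      p < x + 3 / 4 * ((1 - 2 * x + √(1 + 4 * w * x * (1 - x))) / (1 + w)))) :
    9 * ((x + 2 * p) / 3 * (1 - (x + 2 * p) / 3)) ≤ 4 * w * (x - p) ^ 2 := by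
  set s := √(1 + 4 * w * x * (1 - x))
  have hs : s ^ 2 = 1 + 4 * w * x * (1 - x) :=
    sq_sqrt (by nlinarith [mul_nonneg (mul_nonneg hw hx0) (sub_nonneg.2 hx1)])
  have hw1 : 0 < 1 + w := by linarith
  set z := (1 + w) * (p - x) - 3 / 4 * (1 - 2 * x)
  have hlower : x + 3 / 4 * ((1 - 2 * x - s) / (1 + w)) < p ↔ -(3 / 4 * s) < z := by
    rw [← sub_pos, show p - (x + 3 / 4 * ((1 - 2 * x - s) / (1 + w))) = (z + 3 / 4 * s) / (1 + w)
      by field_simp; ring, div_pos_iff_of_pos_right hw1, ← neg_lt_iff_pos_add]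
  have hupper : p < x + 3 / 4 * ((1 - 2 * x + s) / (1 + w)) ↔ z < 3 / 4 * s := by
    rw [← sub_pos, show x + 3 / 4 * ((1 - 2 * x + s) / (1 + w)) - p = (3 / 4 * s - z) / (1 + w)
      by field_simp; ring, div_pos_iff_of_pos_right hw1, sub_pos]
  rw [hlower, hupper, ← abs_lt, not_lt] at h
  have hout : (3 / 4 * s) ^ 2 ≤ z ^ 2 :=
    sq_le_sq.2 (by rwa [abs_of_nonneg (by positivity : 0 ≤ 3 / 4 * s)])
  -- `z² - (3s/4)² = (1 + w) / 4 · (4w(x - p)² - 9m(1 - m))` with `m = (x + 2p) / 3`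
  have key :
      0 ≤ (1 + w) * (4 * w * (x - p) ^ 2 - 9 * ((x + 2 * p) / 3 * (1 - (x + 2 * p) / 3))) := by
    simp only [z] at hout
    linear_combination 4 * hout - 9 / 4 * hs
  exact sub_nonneg.1 ((mul_nonneg_iff_of_pos_left hw1).1 key)

lemma le_mul_klQuadBound_of_not_mem_interval {N k : ℕ} {a θ p : ℝ} (hN : 0 < N) (hk : k ≤ N)
    (ha : 0 < a) (hθ : θ = 9 / (8 * a)) (hp0 : 0 < p) (hp1 : p < 1)
    (hmiss :
      ¬(k / N + 3 / 4 * ((1 - 2 * k / N - √(1 + 4 * θ * k * (1 - k / N))) / (1 + θ * N)) < p ∧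
        p < k / N + 3 / 4 * ((1 - 2 * k / N + √(1 + 4 * θ * k * (1 - k / N))) / (1 + θ * N)))) :
    a ≤ N * klQuadBound (k / N) p := by
  have hNr : (0 : ℝ) < N := Nat.cast_pos.2 hN
  have hrad : 4 * θ * k = 4 * (θ * N) * (k / N) := by field_simp
  rw [mul_div_assoc, hrad] at hmiss
  have hx1 : (k : ℝ) / N ≤ 1 := div_le_one_of_le₀ (by exact_mod_cast hk) hNr.le
  have key := nine_mul_le_of_not_mem_interval (by rw [hθ]; positivity) (by positivity) hx1 hmiss
  have hm : 0 < (k / N + 2 * p) / 3 * (1 - (k / N + 2 * p) / 3) :=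
    mul_pos (by positivity) (by linarith)
  have hscale : 2 * a / 9 * (4 * (θ * N) * (k / N - p) ^ 2) = N * (k / N - p) ^ 2 := by
    rw [hθ]; field_simp; ring
  rw [klQuadBound, mul_div_assoc', le_div_iff₀ (by positivity)]
  nlinarith [mul_le_mul_of_nonneg_left key (by positivity : (0 : ℝ) ≤ 2 * a / 9)]

/-- Theorem 1 (rigorous formula): the confidence interval
`(ℒ(K), 𝒰(K))` with `θ = 9/(8 ln(2/δ))` has coverage probability
exceeding `1 - δ` for every `p ∈ (0,1)`. -/
theorem binomial_confidence_interval_coverage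
    (N : ℕ) (hN : 0 < N) (δ : ℝ) (hδ : δ ∈ Set.Ioo (0:ℝ) 1)
    (θ : ℝ) (hθ : θ = 9 / (8 * Real.log (2 / δ)))
    (L U : ℕ → ℝ)
    (hL : ∀ k ≤ N, L k = (k : ℝ) / N +
      3 / 4 * ((1 - 2 * k / N - Real.sqrt (1 + 4 * θ * k * (1 - (k : ℝ) / N))) / (1 + θ * N)))
    (hU : ∀ k ≤ N, U k = (k : ℝ) / N +
      3 / 4 * ((1 - 2 * k / N + Real.sqrt (1 + 4 * θ * k * (1 - (k : ℝ) / N))) / (1 + θ * N)))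
    (p : ℝ) (hp : p ∈ Set.Ioo (0:ℝ) 1) :
    1 - δ < ∑ k ∈ Finset.range (N + 1),
      (if L k < p ∧ p < U k then (N.choose k : ℝ) * p ^ k * (1 - p) ^ (N - k) else 0) := by
  obtain ⟨hδ0, hδ1⟩ := hδ
  obtain ⟨hp0, hp1⟩ := hp
  have ha : 0 < log (2 / δ) := log_pos (by rw [lt_div_iff₀ hδ0]; linarith)
  have hexp : exp (-log (2 / δ)) = δ / 2 := by rw [exp_neg, exp_log (by positivity), inv_div]
  set S := (range (N + 1)).filter fun k => ¬(L k < p ∧ p < U k)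
  have hmisses : ∑ k ∈ S, binomWeight N p k < δ := by
    refine (sum_binomWeight_lt_two_mul_exp hN hp0 hp1 ha (filter_subset _ _)
      fun k hk => ?_).trans_eq (by rw [hexp]; ring)
    obtain ⟨hk, hmiss⟩ := mem_filter.1 hk
    have hkN := mem_range_succ_iff.1 hk
    rw [hL k hkN, hU k hkN] at hmiss
    exact le_mul_klQuadBound_of_not_mem_interval hN hkN ha hθ hp0 hp1 hmiss
  have htotal := sum_filter_add_sum_filter_not (range (N + 1)) (fun k => L k < p ∧ p < U k)
    (binomWeight N p)
  rw [sum_binomWeight] at htotal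
  rw [← sum_filter]
  change 1 - δ < ∑ k ∈ _, binomWeight N p k
  linarith
end

section
/- Let N be a positive integer, δ ∈ (0,1), and let k be an integer with 0 < k < N. Set θ = 9/(8 ln(2/δ)) and 𝒰(k) = k/N + (3/4)·(1 − 2k/N + √(1 + 4θk(1 − k/N)))/(1 + θN). If p̄ ∈ (0,1) satisfies ∑_{j=0}^{k} C(N,j) p̄^j (1−p̄)^(N−j) = δ/2 (the Clopper–Pearson upper confidence limit), then p̄ < 𝒰(k). -/
/-!
Write `a = k/N`. If `U ≤ p̄`, the Chernoff bound gives
`δ/2 = P(Bin(N, p̄) ≤ k) < exp(-N · KL(a‖p̄))`. The Bernoulli divergence satisfies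
`KL(a‖p) ≥ 9(p - a)² / (2(a + 2p)(3 - a - 2p))` (both sides vanish at `p = a`, and their
derivatives in `p` differ by `(p - a)³ Q / ((a + 2p)²(3 - a - 2p)² p(1 - p))` with `Q > 0`).
With `θ = 9/(8 log(2/δ))`, the inequality `N · (that bound) ≥ log(2/δ)` is the quadratic
inequality `4(1 + θN)y² - 6(1 - 2a)y - 9a(1 - a) ≥ 0` in `y = p̄ - a`, whose larger root is
exactly `U - a`. Hence `δ/2 < exp(-log(2/δ)) = δ/2`.
-/

open Real Set Finset

noncomputable def klBernoulli (a p : ℝ) : ℝ :=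
  a * (log a - log p) + (1 - a) * (log (1 - a) - log (1 - p))

-- With `m = (a + 2p)/3` this is `(p - a)² / (2 m (1 - m))`.
noncomputable def klQuadraticBound (a p : ℝ) : ℝ :=
  9 * (p - a) ^ 2 / (2 * ((a + 2 * p) * (3 - a - 2 * p)))

theorem hasDerivAt_klBernoulli (a : ℝ) {x : ℝ} (hx0 : 0 < x) (hx1 : x < 1) :
    HasDerivAt (klBernoulli a) ((x - a) / (x * (1 - x))) x := by
  have hlog1 : HasDerivAt (fun y => log (1 - y)) (-1 / (1 - x)) x := by
    simpa using ((hasDerivAt_id x).const_sub 1).log (sub_ne_zero.2 hx1.ne')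
  refine ((((hasDerivAt_log hx0.ne').const_sub (log a)).const_mul a).add
    ((hlog1.const_sub (log (1 - a))).const_mul (1 - a))).congr_deriv ?_
  have : 1 - x ≠ 0 := by linarith
  field_simp
  ring

theorem hasDerivAt_klQuadraticBound (a : ℝ) {x : ℝ} (hP : (a + 2 * x) * (3 - a - 2 * x) ≠ 0) :
    HasDerivAt (klQuadraticBound a)
      (9 * (x - a) * (2 * ((a + 2 * x) * (3 - a - 2 * x)) - (x - a) * (6 - 4 * a - 8 * x))
        / (2 * ((a + 2 * x) * (3 - a - 2 * x)) ^ 2)) x := by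
  have hnum : HasDerivAt (fun y => 9 * (y - a) ^ 2) (9 * (2 * (x - a))) x := by
    simpa using (((hasDerivAt_id x).sub_const a).pow 2).const_mul 9
  have hden : HasDerivAt (fun y => 2 * ((a + 2 * y) * (3 - a - 2 * y)))
      (2 * (6 - 4 * a - 8 * x)) x := by
    refine (((((hasDerivAt_id' x).const_mul 2).const_add a).mul
      (((hasDerivAt_id' x).const_mul 2).const_sub (3 - a))).const_mul 2).congr_deriv ?_
    ring
  refine (hnum.div hden (mul_ne_zero two_ne_zero hP)).congr_deriv ?_
  rw [div_eq_div_iff (by positivity) (by positivity)]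
  ring

theorem hasDerivAt_klBernoulli_sub_klQuadraticBound {a x : ℝ} (hx0 : 0 < x) (hx1 : x < 1)
    (hP : (a + 2 * x) * (3 - a - 2 * x) ≠ 0) :
    HasDerivAt (fun y => klBernoulli a y - klQuadraticBound a y)
      ((x - a) ^ 3 * (9 - 6 * a - 21 * x + a ^ 2 + 10 * a * x + 16 * x ^ 2)
        / (((a + 2 * x) * (3 - a - 2 * x)) ^ 2 * (x * (1 - x)))) x := by
  refine ((hasDerivAt_klBernoulli a hx0 hx1).sub
    (hasDerivAt_klQuadraticBound a hP)).congr_deriv ?_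
  have : x * (1 - x) ≠ 0 := mul_ne_zero hx0.ne' (by linarith)
  rw [div_sub_div _ _ this (by positivity), div_eq_div_iff (by positivity) (by positivity)]
  ring

theorem klQuadraticBound_le_klBernoulli {a p : ℝ} (ha : 0 < a) (hap : a ≤ p) (hp : p < 1) :
    klQuadraticBound a p ≤ klBernoulli a p := by
  have hderiv : ∀ x ∈ Icc a p, HasDerivAt (fun y => klBernoulli a y - klQuadraticBound a y)
      ((x - a) ^ 3 * (9 - 6 * a - 21 * x + a ^ 2 + 10 * a * x + 16 * x ^ 2)
        / (((a + 2 * x) * (3 - a - 2 * x)) ^ 2 * (x * (1 - x)))) x := fun x ⟨hax, hxp⟩ =>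
    hasDerivAt_klBernoulli_sub_klQuadraticBound (by linarith) (by linarith) (by nlinarith)
  have hmono : MonotoneOn (fun y => klBernoulli a y - klQuadraticBound a y) (Icc a p) := by
    refine monotoneOn_of_hasDerivWithinAt_nonneg (convex_Icc a p)
      (fun x hx => (hderiv x hx).continuousAt.continuousWithinAt)
      (fun x hx => (hderiv x (interior_subset hx)).hasDerivWithinAt) fun x hx => ?_
    obtain ⟨hax, hxp⟩ : a < x ∧ x < p := by rwa [interior_Icc] at hx
    have hQ : 0 < 9 - 6 * a - 21 * x + a ^ 2 + 10 * a * x + 16 * x ^ 2 := by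
      nlinarith [sq_nonneg (4 * x - 21 / 8), sq_nonneg (a - x)]
    exact div_nonneg (mul_nonneg (pow_nonneg (by linarith) 3) hQ.le)
      (mul_nonneg (sq_nonneg _) (mul_nonneg (by linarith) (by linarith)))
  simpa [klBernoulli, klQuadraticBound] using
    hmono (left_mem_Icc.2 hap) (right_mem_Icc.2 hap) hap

theorem binomial_sum_mul_pow_lt {N k : ℕ} (hkN : k < N) {p q r : ℝ} (hp : 0 < p) (hq : 0 ≤ q)
    (hr0 : 0 < r) (hr1 : r ≤ 1) :
    (∑ j ∈ range (k + 1), (N.choose j : ℝ) * p ^ j * q ^ (N - j)) * r ^ k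
      < (p * r + q) ^ N := by
  calc (∑ j ∈ range (k + 1), (N.choose j : ℝ) * p ^ j * q ^ (N - j)) * r ^ k
      ≤ ∑ j ∈ range (k + 1), (N.choose j : ℝ) * p ^ j * q ^ (N - j) * r ^ j := by
        rw [sum_mul]
        refine sum_le_sum fun j hj => mul_le_mul_of_nonneg_left ?_ (by positivity)
        exact pow_le_pow_of_le_one hr0.le hr1 (Nat.lt_succ_iff.1 (mem_range.1 hj))
    _ < ∑ j ∈ range (N + 1), (N.choose j : ℝ) * p ^ j * q ^ (N - j) * r ^ j :=
        sum_lt_sum_of_subset (range_subset_range.2 (by omega)) (self_mem_range_succ N)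
          (by rw [Finset.mem_range]; omega) (by rw [Nat.choose_self, Nat.sub_self]; positivity)
          fun j _ _ => by positivity
    _ = (p * r + q) ^ N := by
        rw [add_pow]
        exact sum_congr rfl fun j _ => by ring

theorem exp_neg_mul_klBernoulli {N k : ℕ} (hkN : k ≤ N) {a p : ℝ} (hk : (k : ℝ) = a * N)
    (ha0 : 0 < a) (ha1 : a < 1) (hp0 : 0 < p) (hp1 : p < 1) :
    exp (-(N * klBernoulli a p)) = (p / a) ^ k * ((1 - p) / (1 - a)) ^ (N - k) := by
  have : -(N * klBernoulli a p)
      = k * (log p - log a) + (N - k : ℕ) * (log (1 - p) - log (1 - a)) := by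
    rw [klBernoulli, Nat.cast_sub hkN, hk]
    ring
  rw [this, exp_add, exp_nat_mul, exp_nat_mul, exp_sub, exp_sub, exp_log hp0, exp_log ha0,
    exp_log (by linarith), exp_log (by linarith)]

theorem binomial_cdf_lt_exp_neg_mul_klBernoulli {N k : ℕ} (hk0 : 0 < k) (hkN : k < N) {p : ℝ}
    (hkp : (k : ℝ) / N < p) (hp1 : p < 1) :
    ∑ j ∈ range (k + 1), (N.choose j : ℝ) * p ^ j * (1 - p) ^ (N - j)
      < exp (-(N * klBernoulli (k / N) p)) := by
  set a : ℝ := k / N with ha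
  have hN : (0 : ℝ) < N := by exact_mod_cast hk0.trans hkN
  have ha0 : 0 < a := by positivity
  have ha1 : a < 1 := (div_lt_one hN).2 (by exact_mod_cast hkN)
  have hp0 : 0 < p := ha0.trans hkp
  have h1a : 1 - a ≠ 0 := by linarith
  -- the exponential tilt `r = (a/p) · ((1-p)/(1-a))` optimizes the Chernoff bound
  set r := a * (1 - p) / (p * (1 - a)) with hr
  have hr0 : 0 < r := div_pos (mul_pos ha0 (by linarith)) (mul_pos hp0 (by linarith))
  have hr1 : r ≤ 1 := by
    rw [div_le_one (mul_pos hp0 (by linarith))]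
    nlinarith
  have hchernoff := binomial_sum_mul_pow_lt hkN hp0 (by linarith : 0 ≤ 1 - p) hr0 hr1
  have hmgf : (p * r + (1 - p)) ^ N = (p / a) ^ k * ((1 - p) / (1 - a)) ^ (N - k) * r ^ k := by
    rw [show p * r + (1 - p) = (1 - p) / (1 - a) by rw [hr]; field_simp; ring,
      show r = a / p * ((1 - p) / (1 - a)) by rw [hr]; field_simp, mul_pow,
      ← pow_mul_pow_sub _ hkN.le]
    have hpa : (p / a) ^ k * (a / p) ^ k = 1 := by
      rw [← mul_pow, div_mul_div_cancel₀ ha0.ne', div_self hp0.ne', one_pow]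
    linear_combination (-(((1 - p) / (1 - a)) ^ k * ((1 - p) / (1 - a)) ^ (N - k))) * hpa
  rw [exp_neg_mul_klBernoulli hkN.le (by rw [ha]; field_simp) ha0 ha1 hp0 hp1]
  rw [hmgf] at hchernoff
  exact lt_of_mul_lt_mul_right hchernoff (by positivity)

theorem quadratic_nonneg_of_larger_root_le {a b c x : ℝ} (ha : 0 < a)
    (hx : (-b + √(discrim a b c)) / (2 * a) ≤ x) : 0 ≤ a * x ^ 2 + b * x + c := by
  have hfactor : 4 * a * (a * x ^ 2 + b * x + c) = (2 * a * x + b) ^ 2 - discrim a b c := by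
    rw [discrim]; ring
  rcases lt_or_ge (discrim a b c) 0 with hd | hd
  · nlinarith [sq_nonneg (2 * a * x + b)]
  have hs0 := sqrt_nonneg (discrim a b c)
  rw [← sq_sqrt hd] at hfactor
  rw [div_le_iff₀ (by positivity)] at hx
  nlinarith

theorem larger_root_pos {a b c : ℝ} (ha : 0 < a) (hc : c < 0) :
    0 < (-b + √(discrim a b c)) / (2 * a) := by
  have : |b| < √(discrim a b c) := by
    rw [← sqrt_sq_eq_abs]
    exact sqrt_lt_sqrt (sq_nonneg b) (by rw [discrim]; nlinarith)
  have := le_abs_self b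
  exact div_pos (by linarith) (by linarith)

noncomputable def clopperPearsonBound (θ N a : ℝ) : ℝ :=
  a + 3 / 4 * ((1 - 2 * a + √(1 + 4 * θ * (a * N) * (1 - a))) / (1 + θ * N))

theorem clopperPearsonBound_sub_eq_larger_root {θ N a : ℝ} (hθ : 0 < θ) (hN : 0 ≤ N) :
    clopperPearsonBound θ N a - a
      = (-(-6 * (1 - 2 * a))
          + √(discrim (4 * (1 + θ * N)) (-6 * (1 - 2 * a)) (-9 * (a * (1 - a)))))
        / (2 * (4 * (1 + θ * N))) := by
  have hdisc : discrim (4 * (1 + θ * N)) (-6 * (1 - 2 * a)) (-9 * (a * (1 - a)))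
      = 6 ^ 2 * (1 + 4 * θ * (a * N) * (1 - a)) := by
    rw [discrim]; ring
  have : 0 < 1 + θ * N := by positivity
  rw [clopperPearsonBound, hdisc, sqrt_mul (by norm_num), sqrt_sq (by norm_num)]
  field_simp
  ring

theorem lt_clopperPearsonBound {θ N a : ℝ} (hθ : 0 < θ) (hN : 0 ≤ N) (ha0 : 0 < a)
    (ha1 : a < 1) :
    a < clopperPearsonBound θ N a := by
  have := clopperPearsonBound_sub_eq_larger_root (a := a) hθ hN
  have := larger_root_pos (b := -6 * (1 - 2 * a)) (by positivity : 0 < 4 * (1 + θ * N))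
    (by nlinarith : -9 * (a * (1 - a)) < 0)
  linarith

theorem le_mul_klQuadraticBound {θ N a p : ℝ} (hθ : 0 < θ) (hN : 0 ≤ N) (ha0 : 0 < a)
    (ha1 : a < 1) (hp : clopperPearsonBound θ N a ≤ p) (hp1 : p < 1) :
    9 / (8 * θ) ≤ N * klQuadraticBound a p := by
  have hquad := quadratic_nonneg_of_larger_root_le (by positivity : 0 < 4 * (1 + θ * N))
    ((clopperPearsonBound_sub_eq_larger_root hθ hN).symm.trans_le (sub_le_sub_right hp a))
  have hap := (lt_clopperPearsonBound hθ hN ha0 ha1).trans_le hp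
  have hP : 0 < (a + 2 * p) * (3 - a - 2 * p) := mul_pos (by linarith) (by linarith)
  rw [klQuadraticBound, mul_div_assoc', div_le_div_iff₀ (by positivity) (by positivity)]
  nlinarith

theorem clopper_pearson_upper_lt_U_general
    (N : ℕ) (δ : ℝ) (hδ : δ ∈ Set.Ioo (0:ℝ) 1)
    (k : ℕ) (hk0 : 0 < k) (hkN : k < N)
    (θ : ℝ) (hθ : θ = 9 / (8 * Real.log (2 / δ)))
    (U : ℝ)
    (hU : U = (k : ℝ) / N +
      3 / 4 * ((1 - 2 * k / N + Real.sqrt (1 + 4 * θ * k * (1 - (k : ℝ) / N))) / (1 + θ * N)))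
    (pbar : ℝ) (hpbar : pbar ∈ Set.Ioo (0:ℝ) 1)
    (hsum : ∑ j ∈ Finset.range (k + 1),
      (N.choose j : ℝ) * pbar ^ j * (1 - pbar) ^ (N - j) = δ / 2) :
    pbar < U := by
  obtain ⟨hδ0, hδ1⟩ := hδ
  have hN : (0 : ℝ) < N := by exact_mod_cast hk0.trans hkN
  have ha0 : (0 : ℝ) < k / N := by positivity
  have ha1 : (k : ℝ) / N < 1 := (div_lt_one hN).2 (by exact_mod_cast hkN)
  have hL : 0 < log (2 / δ) := log_pos (by rw [lt_div_iff₀ hδ0]; linarith)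
  have hθ0 : 0 < θ := by rw [hθ]; positivity
  have hL_eq : log (2 / δ) = 9 / (8 * θ) := by rw [hθ]; field_simp
  have hU_eq : U = clopperPearsonBound θ N (k / N) := by
    rw [hU, clopperPearsonBound, mul_div_assoc, div_mul_cancel₀ _ hN.ne']
  by_contra! hUp
  have hap : (k : ℝ) / N < pbar :=
    (lt_clopperPearsonBound hθ0 hN.le ha0 ha1).trans_le (hU_eq ▸ hUp)
  have hLkl : log (2 / δ) ≤ N * klBernoulli (k / N) pbar := calc
    log (2 / δ) ≤ N * klQuadraticBound (k / N) pbar :=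
      hL_eq ▸ le_mul_klQuadraticBound hθ0 hN.le ha0 ha1 (hU_eq ▸ hUp) hpbar.2
    _ ≤ N * klBernoulli (k / N) pbar :=
      mul_le_mul_of_nonneg_left (klQuadraticBound_le_klBernoulli ha0 hap.le hpbar.2) hN.le
  have hchernoff := binomial_cdf_lt_exp_neg_mul_klBernoulli hk0 hkN hap hpbar.2
  rw [hsum] at hchernoff
  have : exp (-(N * klBernoulli (k / N) pbar)) ≤ δ / 2 := calc
    _ ≤ exp (-log (2 / δ)) := exp_le_exp.2 (neg_le_neg hLkl)
    _ = δ / 2 := by rw [exp_neg, exp_log (by positivity), inv_div]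
  linarith

/-- The Clopper–Pearson upper confidence limit is bounded above by `𝒰(k)`. -/
theorem clopper_pearson_upper_lt_U
    (N : ℕ) (hN : 0 < N) (δ : ℝ) (hδ : δ ∈ Set.Ioo (0:ℝ) 1)
    (k : ℕ) (hk0 : 0 < k) (hkN : k < N)
    (θ : ℝ) (hθ : θ = 9 / (8 * Real.log (2 / δ)))
    (U : ℝ)
    (hU : U = (k : ℝ) / N +
      3 / 4 * ((1 - 2 * k / N + Real.sqrt (1 + 4 * θ * k * (1 - (k : ℝ) / N))) / (1 + θ * N)))
    (pbar : ℝ) (hpbar : pbar ∈ Set.Ioo (0:ℝ) 1)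
    (hsum : ∑ j ∈ Finset.range (k + 1),
      (N.choose j : ℝ) * pbar ^ j * (1 - pbar) ^ (N - j) = δ / 2) :
    pbar < U :=
  clopper_pearson_upper_lt_U_general N δ hδ k hk0 hkN θ hθ U hU pbar hpbar hsum
end

section
/- Let N be a positive integer, p ∈ (0,1), and ε ∈ (0, 1 − p). If K is a Binomial(N,p) random variable, then Pr{K/N ≥ p + ε} ≤ exp(− N ε² / (2 (p + ε/3)(1 − p − ε/3))); that is, ∑_{k=⌈N(p+ε)⌉}^{N} C(N,k) p^k (1−p)^(N−k) ≤ exp(− N ε² / (2 (p + ε/3)(1 − p − ε/3))). -/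
/-!
Chernoff's method: for every `t ≥ 0` the tail is at most `e^{-tNq} (p e^t + 1 - p)^N`, and the
optimal `t` turns this into `e^{-N KL(q ‖ p)}` with `q = p + ε`. Writing the binary KL divergence as
the `f`-divergence `p φ(q/p) + (1 - p) φ((1 - q)/(1 - p))` with `φ(x) = x log x + 1 - x`, Massart's
exponent comes from the Bernstein-type bound `a φ((a + u)/a) ≥ u² / (2(a + u/3))`, applied with
`(a, u) = (p, ε)` and `(1 - p, -ε)`: the two lower bounds `ε²/(2(p + ε/3))` and
`ε²/(2(1 - p - ε/3))` add up to `ε²/(2(p + ε/3)(1 - p - ε/3))` since `(p + ε/3) + (1 - p - ε/3) = 1`.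
The Bernstein bound holds because `φ(x) - 3(x - 1)²/(2(x + 2))` is convex on `(0, ∞)`, its second
derivative being `(x - 1)²(x + 8)/(x(x + 2)³)`, and has a critical point at `x = 1`.
-/

open Real Set InformationTheory

lemma hasDerivAt_three_mul_sq_sub_one_div (x : ℝ) (hx : x + 2 ≠ 0) :
    HasDerivAt (fun x => 3 * (x - 1) ^ 2 / (2 * (x + 2)))
      (3 * (x - 1) * (x + 5) / (2 * (x + 2) ^ 2)) x := by
  have hnum : HasDerivAt (fun x => 3 * (x - 1) ^ 2) (6 * (x - 1)) x :=
    ((((hasDerivAt_id x).sub_const 1).pow 2).const_mul 3).congr_deriv (by simp; ring)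
  have hden : HasDerivAt (fun x : ℝ => 2 * (x + 2)) 2 x :=
    (((hasDerivAt_id x).add_const 2).const_mul 2).congr_deriv (by simp)
  refine (hnum.fun_div hden (by simpa using hx)).congr_deriv ?_
  field_simp
  ring

lemma hasDerivAt_three_mul_sub_one_mul_add_five_div (x : ℝ) (hx : x + 2 ≠ 0) :
    HasDerivAt (fun x => 3 * (x - 1) * (x + 5) / (2 * (x + 2) ^ 2)) (27 / (x + 2) ^ 3) x := by
  have hnum : HasDerivAt (fun x => 3 * (x - 1) * (x + 5)) (6 * x + 12) x :=
    ((((hasDerivAt_id x).sub_const 1).const_mul 3).mul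
      ((hasDerivAt_id x).add_const 5)).congr_deriv (by simp; ring)
  have hden : HasDerivAt (fun x : ℝ => 2 * (x + 2) ^ 2) (4 * (x + 2)) x :=
    ((((hasDerivAt_id x).add_const 2).pow 2).const_mul 2).congr_deriv (by simp; ring)
  refine (hnum.fun_div hden (by simpa using hx)).congr_deriv ?_
  field_simp
  ring

theorem three_mul_sq_sub_one_div_le_klFun {x : ℝ} (hx : 0 < x) :
    3 * (x - 1) ^ 2 / (2 * (x + 2)) ≤ klFun x := by
  set g : ℝ → ℝ := fun x => klFun x - 3 * (x - 1) ^ 2 / (2 * (x + 2))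
  set g' : ℝ → ℝ := fun x => log x - 3 * (x - 1) * (x + 5) / (2 * (x + 2) ^ 2)
  set g'' : ℝ → ℝ := fun x => x⁻¹ - 27 / (x + 2) ^ 3
  have hg (x : ℝ) (hx : 0 < x) : HasDerivAt g (g' x) x :=
    (hasDerivAt_klFun hx.ne').sub (hasDerivAt_three_mul_sq_sub_one_div x (by linarith))
  have hg' (x : ℝ) (hx : 0 < x) : HasDerivAt g' (g'' x) x :=
    (hasDerivAt_log hx.ne').sub (hasDerivAt_three_mul_sub_one_mul_add_five_div x (by linarith))
  have hg''_nonneg (x : ℝ) (hx : 0 < x) : 0 ≤ g'' x := by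
    simp only [g'']
    rw [sub_nonneg, div_le_iff₀ (by positivity), ← div_eq_inv_mul, le_div_iff₀ hx]
    nlinarith [mul_nonneg (sq_nonneg (x - 1)) (by linarith : (0 : ℝ) ≤ x + 8)]
  have hconvex : ConvexOn ℝ (Ioi 0) g := by
    refine convexOn_of_hasDerivWithinAt2_nonneg (f' := g') (f'' := g'') (convex_Ioi 0)
      (fun x hx => (hg x hx).continuousAt.continuousWithinAt) ?_ ?_ ?_ <;>
      simp only [interior_Ioi]
    · exact fun x hx => (hg x hx).hasDerivWithinAt
    · exact fun x hx => (hg' x hx).hasDerivWithinAt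
    · exact hg''_nonneg
  have hmin : IsMinOn g (Ioi 0) 1 := by
    refine hconvex.isMinOn_of_rightDeriv_eq_zero (by simp) ?_
    rw [(hg 1 one_pos).hasDerivWithinAt.derivWithin (uniqueDiffWithinAt_Ioi 1)]
    simp [g']
  have := hmin (mem_Ioi.2 hx)
  norm_num [g, klFun_one] at this
  linarith

theorem sq_div_le_mul_klFun {a u : ℝ} (ha : 0 < a) (hau : 0 < a + u) :
    u ^ 2 / (2 * (a + u / 3)) ≤ a * klFun ((a + u) / a) := by
  have h3au : a * 3 + u ≠ 0 := by linarith
  calc u ^ 2 / (2 * (a + u / 3))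
      = a * (3 * ((a + u) / a - 1) ^ 2 / (2 * ((a + u) / a + 2))) := by
        field_simp
        ring
    _ ≤ a * klFun ((a + u) / a) := by
        gcongr
        exact three_mul_sq_sub_one_div_le_klFun (by positivity)

noncomputable def binaryKL (q p : ℝ) : ℝ :=
  q * log (q / p) + (1 - q) * log ((1 - q) / (1 - p))

theorem binaryKL_eq_klFun {p : ℝ} (hp₀ : p ≠ 0) (hp₁ : p ≠ 1) (q : ℝ) :
    binaryKL q p = p * klFun (q / p) + (1 - p) * klFun ((1 - q) / (1 - p)) := by
  have : 1 - p ≠ 0 := sub_ne_zero.2 hp₁.symm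
  simp only [binaryKL, klFun_apply]
  field_simp
  ring

theorem sq_div_le_binaryKL_add {p ε : ℝ} (hp₀ : 0 < p) (hp₁ : p < 1) (hq₀ : 0 < p + ε)
    (hq₁ : p + ε < 1) :
    ε ^ 2 / (2 * ((p + ε / 3) * (1 - p - ε / 3))) ≤ binaryKL (p + ε) p := by
  have ha : p * 3 + ε ≠ 0 := by linarith
  have hb : 3 * (1 - p) - ε ≠ 0 := by linarith
  have hb' : 3 * (1 - p) + -ε ≠ 0 := by linarith
  calc ε ^ 2 / (2 * ((p + ε / 3) * (1 - p - ε / 3)))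
      = ε ^ 2 / (2 * (p + ε / 3)) + (-ε) ^ 2 / (2 * ((1 - p) + -ε / 3)) := by
        field_simp
        ring
    _ ≤ p * klFun ((p + ε) / p) + (1 - p) * klFun ((1 - p + -ε) / (1 - p)) :=
        add_le_add (sq_div_le_mul_klFun hp₀ hq₀) (sq_div_le_mul_klFun (by linarith) (by linarith))
    _ = binaryKL (p + ε) p := by
        rw [binaryKL_eq_klFun hp₀.ne' hp₁.ne, show 1 - p + -ε = 1 - (p + ε) by ring]

theorem binomial_tail_le_chernoff {p : ℝ} (hp₀ : 0 ≤ p) (hp₁ : p ≤ 1) (N : ℕ) (a : ℝ)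
    {t : ℝ} (ht : 0 ≤ t) :
    ∑ k ∈ Finset.range (N + 1),
      (if a ≤ k then (N.choose k : ℝ) * p ^ k * (1 - p) ^ (N - k) else 0)
    ≤ exp (-(t * a)) * (p * exp t + (1 - p)) ^ N := by
  calc ∑ k ∈ Finset.range (N + 1),
        (if a ≤ k then (N.choose k : ℝ) * p ^ k * (1 - p) ^ (N - k) else 0)
      ≤ ∑ k ∈ Finset.range (N + 1),
        exp (t * (k - a)) * ((N.choose k : ℝ) * p ^ k * (1 - p) ^ (N - k)) := by
        gcongr with k
        split_ifs with hk
        · exact le_mul_of_one_le_left (by positivity) (one_le_exp (by nlinarith))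
        · positivity
    _ = exp (-(t * a)) * (p * exp t + (1 - p)) ^ N := by
        rw [add_pow, Finset.mul_sum]
        refine Finset.sum_congr rfl fun k _ => ?_
        rw [mul_sub, sub_eq_neg_add, exp_add, mul_pow, ← exp_nat_mul, mul_comm (k : ℝ)]
        ring

theorem binomial_tail_le_exp_neg_mul_binaryKL {p q : ℝ} (hp : 0 < p) (hpq : p ≤ q) (hq : q < 1)
    (N : ℕ) :
    ∑ k ∈ Finset.range (N + 1),
      (if N * q ≤ k then (N.choose k : ℝ) * p ^ k * (1 - p) ^ (N - k) else 0)
    ≤ exp (-(N * binaryKL q p)) := by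
  have hq₀ : 0 < q := hp.trans_le hpq
  have h1p : 0 < 1 - p := by linarith
  have h1q : 0 < 1 - q := by linarith
  set t := log (q * (1 - p) / (p * (1 - q)))
  have ht : 0 ≤ t := log_nonneg <| by
    rw [le_div_iff₀ (by positivity)]
    nlinarith
  have hmgf : p * exp t + (1 - p) = exp (log ((1 - p) / (1 - q))) := by
    rw [exp_log (by positivity), exp_log (by positivity)]
    field_simp
    ring
  have hKL : binaryKL q p = q * t - log ((1 - p) / (1 - q)) := by
    simp only [binaryKL, t]
    rw [log_div (by positivity) (by positivity), log_div (by positivity) (by positivity),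
      log_div (by positivity) (by positivity), log_div (by positivity) (by positivity),
      log_mul (by positivity) (by positivity), log_mul (by positivity) (by positivity)]
    ring
  refine (binomial_tail_le_chernoff hp.le (by linarith) N _ ht).trans_eq ?_
  rw [hmgf, ← exp_nat_mul, ← exp_add, hKL]
  congr 1
  ring

theorem massart_upper_tail_general
    (N : ℕ) (p : ℝ) (hp : p ∈ Set.Ioo (0:ℝ) 1)
    (ε : ℝ) (hε : ε ∈ Set.Ioo 0 (1 - p)) :
    ∑ k ∈ Finset.range (N + 1),
      (if (N : ℝ) * (p + ε) ≤ k then (N.choose k : ℝ) * p ^ k * (1 - p) ^ (N - k) else 0)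
    ≤ Real.exp (- (N * ε ^ 2) / (2 * (p + ε / 3) * (1 - p - ε / 3))) := by
  obtain ⟨hp₀, hp₁⟩ := hp
  obtain ⟨hε₀, hε₁⟩ := hε
  calc _ ≤ exp (-(N * binaryKL (p + ε) p)) :=
        binomial_tail_le_exp_neg_mul_binaryKL hp₀ (by linarith) (by linarith) N
    _ ≤ _ := by
        rw [exp_le_exp, neg_div, neg_le_neg_iff, mul_assoc 2, mul_div_assoc]
        gcongr
        exact sq_div_le_binaryKL_add hp₀ hp₁ (by linarith) (by linarith)

/-- Massart's upper-tail inequality for the binomial distribution: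
for `ε ∈ (0, 1 - p)`,
`Pr{K/N ≥ p + ε} ≤ exp(-Nε² / (2(p + ε/3)(1 - p - ε/3)))`. -/
theorem massart_upper_tail
    (N : ℕ) (hN : 0 < N) (p : ℝ) (hp : p ∈ Set.Ioo (0:ℝ) 1)
    (ε : ℝ) (hε : ε ∈ Set.Ioo 0 (1 - p)) :
    ∑ k ∈ Finset.range (N + 1),
      (if (N : ℝ) * (p + ε) ≤ k then (N.choose k : ℝ) * p ^ k * (1 - p) ^ (N - k) else 0)
    ≤ Real.exp (- (N * ε ^ 2) / (2 * (p + ε / 3) * (1 - p - ε / 3))) :=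
  massart_upper_tail_general N p hp ε hε
end

section
/- Let N be a positive integer, δ ∈ (0,1), and let k be an integer with 0 < k < N. Set θ = 9/(8 ln(2/δ)) and 𝒰(k) = k/N + (3/4)·(1 − 2k/N + √(1 + 4θk(1 − k/N)))/(1 + θN). Then k/N < 𝒰(k), and if moreover 𝒰(k) < 1, then exp(− N (𝒰(k) − k/N)² / (2 ((2/3)𝒰(k) + k/(3N)) (1 − (2/3)𝒰(k) − k/(3N)))) = δ/2. -/
/-!
Write `p = k/N` and `t = 𝒰(k) - p`. The formula for `𝒰(k)` says that `t` is the larger root of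
`(1 + θN) t² = (3/2)(1 - 2p) t + (9/4) p (1 - p)`, which is positive because the constant term is.
Multiplying this quadratic by `(8/9) ln(2/δ)` and using `θ ln(2/δ) = 9/8` turns it into
`N t² = ln(2/δ) · 2 (p + 2t/3)(1 - p - 2t/3)`, which is the Massart equation with `x = p + t`.
-/

open Real

theorem mul_sq_eq_of_sq_eq_discrim {a b c s : ℝ} (ha : a ≠ 0) (hs : s ^ 2 = b ^ 2 + 4 * a * c) :
    a * ((b + s) / (2 * a)) ^ 2 = b * ((b + s) / (2 * a)) + c := by
  field_simp
  linear_combination hs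

theorem pos_of_sq_eq_discrim {a b c s : ℝ} (ha : 0 < a) (hc : 0 < c) (hs0 : 0 ≤ s)
    (hs : s ^ 2 = b ^ 2 + 4 * a * c) : 0 < (b + s) / (2 * a) := by
  have hbs : |b| < s := abs_lt_of_sq_lt_sq (by nlinarith [mul_pos ha hc]) hs0
  have := neg_abs_le b
  exact div_pos (by linarith) (by positivity)

theorem massart_equation_of_quadratic {θ L n p U : ℝ} (hθL : θ * L = 9 / 8)
    (h : (1 + θ * n) * (U - p) ^ 2 = 3 / 2 * (1 - 2 * p) * (U - p) + 9 / 4 * (p * (1 - p))) :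
    n * (U - p) ^ 2 = L * (2 * (2 / 3 * U + p / 3) * (1 - 2 / 3 * U - p / 3)) := by
  linear_combination 8 / 9 * L * h - 8 / 9 * n * (U - p) ^ 2 * hθL

theorem exp_neg_log_mul_div {x E : ℝ} (hx : 0 < x) (hE : E ≠ 0) :
    exp (-(log x * E) / E) = x⁻¹ := by
  rw [neg_div, mul_div_assoc, div_self hE, mul_one, exp_neg, exp_log hx]

theorem U_root_of_massart_equation_general
    (N : ℕ) (δ : ℝ) (hδ : δ ∈ Set.Ioo (0:ℝ) 1)
    (k : ℕ) (hk0 : 0 < k) (hkN : k < N)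
    (θ : ℝ) (hθ : θ = 9 / (8 * Real.log (2 / δ)))
    (U : ℝ)
    (hU : U = (k : ℝ) / N +
      3 / 4 * ((1 - 2 * k / N + Real.sqrt (1 + 4 * θ * k * (1 - (k : ℝ) / N))) / (1 + θ * N))) :
    (k : ℝ) / N < U ∧
      (U < 1 →
        Real.exp (- (N * (U - (k : ℝ) / N) ^ 2) /
          (2 * (2 / 3 * U + k / (3 * N)) * (1 - 2 / 3 * U - k / (3 * N)))) = δ / 2) := by
  obtain ⟨hδ0, hδ1⟩ := hδ
  have hN0 : (0 : ℝ) < N := by exact_mod_cast hk0.trans hkN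
  have hp0 : 0 < (k : ℝ) / N := by positivity
  have hp1 : (k : ℝ) / N < 1 := (div_lt_one hN0).mpr (by exact_mod_cast hkN)
  have hpq : 0 < 9 / 4 * ((k : ℝ) / N * (1 - k / N)) := by
    have := mul_pos hp0 (sub_pos.2 hp1)
    positivity
  have hL : 0 < log (2 / δ) := log_pos (by rw [lt_div_iff₀ hδ0]; linarith)
  have hθL : θ * log (2 / δ) = 9 / 8 := by rw [hθ]; field_simp
  have hθ0 : 0 < θ := by rw [hθ]; positivity
  have ha : 0 < 1 + θ * N := by positivity
  have hθk : 0 < θ * k * (1 - (k : ℝ) / N) := mul_pos (by positivity) (sub_pos.2 hp1)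
  set S := √(1 + 4 * θ * k * (1 - (k : ℝ) / N))
  have hS : (3 / 2 * S) ^ 2 = (3 / 2 * (1 - 2 * (k / N))) ^ 2 +
      4 * (1 + θ * N) * (9 / 4 * ((k : ℝ) / N * (1 - k / N))) := by
    rw [mul_pow, sq_sqrt (by positivity)]
    field_simp
    ring
  have ht : U - k / N = (3 / 2 * (1 - 2 * ((k : ℝ) / N)) + 3 / 2 * S) / (2 * (1 + θ * N)) := by
    rw [hU]; field_simp; ring
  have hUp : (k : ℝ) / N < U := by
    linarith [ht ▸ pos_of_sq_eq_discrim ha hpq (by positivity) hS]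
  refine ⟨hUp, fun hU1 => ?_⟩
  have hE : 2 * (2 / 3 * U + k / N / 3) * (1 - 2 / 3 * U - k / N / 3) ≠ 0 := by
    have : 0 < 1 - 2 / 3 * U - k / N / 3 := by linarith
    have : 0 < 2 / 3 * U + k / N / 3 := by linarith
    positivity
  have hmassart := massart_equation_of_quadratic hθL (ht ▸ mul_sq_eq_of_sq_eq_discrim ha.ne' hS)
  rw [show (k : ℝ) / (3 * N) = k / N / 3 by ring, hmassart,
    exp_neg_log_mul_div (by positivity) hE, inv_div]

/-- `𝒰(k)` lies above `k/N`, and when `𝒰(k) < 1` it is a root of the Massart-bound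
equation `exp(-N(x - k/N)²/(2((2/3)x + k/(3N))(1 - (2/3)x - k/(3N)))) = δ/2`. -/
theorem U_root_of_massart_equation
    (N : ℕ) (hN : 0 < N) (δ : ℝ) (hδ : δ ∈ Set.Ioo (0:ℝ) 1)
    (k : ℕ) (hk0 : 0 < k) (hkN : k < N)
    (θ : ℝ) (hθ : θ = 9 / (8 * Real.log (2 / δ)))
    (U : ℝ)
    (hU : U = (k : ℝ) / N +
      3 / 4 * ((1 - 2 * k / N + Real.sqrt (1 + 4 * θ * k * (1 - (k : ℝ) / N))) / (1 + θ * N))) :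
    (k : ℝ) / N < U ∧
      (U < 1 →
        Real.exp (- (N * (U - (k : ℝ) / N) ^ 2) /
          (2 * (2 / 3 * U + k / (3 * N)) * (1 - 2 / 3 * U - k / (3 * N)))) = δ / 2) :=
  U_root_of_massart_equation_general N δ hδ k hk0 hkN θ hθ U hU
end

section
/- Let N be a positive integer, δ ∈ (0,1), and let k be an integer with 0 < k < N. Set θ = 9/(8 ln(2/δ)) and ℒ(k) = k/N + (3/4)·(1 − 2k/N − √(1 + 4θk(1 − k/N)))/(1 + θN). Then ℒ(k) < k/N, and if moreover 0 < ℒ(k), then exp(− N (ℒ(k) − k/N)² / (2 ((2/3)ℒ(k) + k/(3N)) (1 − (2/3)ℒ(k) − k/(3N)))) = δ/2. -/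
/-!
Write `p = k/N`. The offset `D = ℒ - p = (3/4)(1 - 2p - S)/(1 + θN)`, with
`S = √(1 + 4θNp(1-p))`, is the negative root of the quadratic
`(4/3)²(1 + θN) D² - (8/3)(1 - 2p) D - 4p(1-p) = 0`, which is the same as
`N D² = (9/(8θ)) · 2a(1-a)` for `a = p + (2/3)D`. Since `9/(8θ) = log(2/δ)`, the exponent of
the Massart bound at `ℒ` is exactly `-log(2/δ)`.
-/

open Real

noncomputable def massartRoot (θ n p : ℝ) : ℝ :=
  p + 3 / 4 * ((1 - 2 * p - √(1 + 4 * θ * n * p * (1 - p))) / (1 + θ * n))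

lemma massartRoot_lt {θ n p : ℝ} (hp : 0 < p) (harg : 0 ≤ θ * n * p * (1 - p))
    (hc : 0 < 1 + θ * n) : massartRoot θ n p < p := by
  have hS : 1 ≤ √(1 + 4 * θ * n * p * (1 - p)) :=
    one_le_sqrt.2 (by linarith)
  have hneg : (1 - 2 * p - √(1 + 4 * θ * n * p * (1 - p))) / (1 + θ * n) < 0 :=
    div_neg_of_neg_of_pos (by linarith) hc
  unfold massartRoot
  linarith

lemma massartRoot_sub_sq {θ n p : ℝ} (hc : 1 + θ * n ≠ 0)
    (harg : 0 ≤ 1 + 4 * θ * n * p * (1 - p)) :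
    n * (massartRoot θ n p - p) ^ 2 * (8 * θ) =
      9 * (2 * (2 / 3 * massartRoot θ n p + p / 3) * (1 - 2 / 3 * massartRoot θ n p - p / 3)) := by
  have hD : massartRoot θ n p - p =
      3 / 4 * ((1 - 2 * p - √(1 + 4 * θ * n * p * (1 - p))) / (1 + θ * n)) := by
    unfold massartRoot
    ring
  set S := √(1 + 4 * θ * n * p * (1 - p))
  set D := massartRoot θ n p - p
  have hS : S = 1 - 2 * p - 4 / 3 * (1 + θ * n) * D := by
    rw [hD]
    field_simp
    ring
  have hS2 : S ^ 2 = 1 + 4 * θ * n * p * (1 - p) := sq_sqrt harg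
  have hquad : (1 + θ * n) *
      (16 / 9 * (1 + θ * n) * D ^ 2 - 8 / 3 * (1 - 2 * p) * D - 4 * p * (1 - p)) = 0 := by
    rw [hS] at hS2
    linear_combination hS2
  rw [show massartRoot θ n p = p + D by ring]
  linear_combination 9 / 2 * (mul_eq_zero.1 hquad).resolve_left hc

lemma exp_neg_div_of_eq_log_mul {t x y : ℝ} (ht : 0 < t) (hy : y ≠ 0) (h : x = log t * y) :
    exp (-x / y) = t⁻¹ := by
  rw [h, neg_div, mul_div_cancel_right₀ _ hy, exp_neg, exp_log ht]

theorem L_root_of_massart_equation_general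
    (N : ℕ) (δ : ℝ) (hδ : δ ∈ Set.Ioo (0:ℝ) 1)
    (k : ℕ) (hk0 : 0 < k) (hkN : k < N)
    (θ : ℝ) (hθ : θ = 9 / (8 * Real.log (2 / δ)))
    (L : ℝ)
    (hL : L = (k : ℝ) / N +
      3 / 4 * ((1 - 2 * k / N - Real.sqrt (1 + 4 * θ * k * (1 - (k : ℝ) / N))) / (1 + θ * N))) :
    L < (k : ℝ) / N ∧
      (0 < L →
        Real.exp (- (N * (L - (k : ℝ) / N) ^ 2) /
          (2 * (2 / 3 * L + k / (3 * N)) * (1 - 2 / 3 * L - k / (3 * N)))) = δ / 2) := by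
  obtain ⟨hδ0, hδ1⟩ := hδ
  have hN : (0 : ℝ) < N := by exact_mod_cast hk0.trans hkN
  set p : ℝ := (k : ℝ) / N
  have hp0 : 0 < p := by positivity
  have hp1 : p < 1 := (div_lt_one hN).2 (by exact_mod_cast hkN)
  have hlog : 0 < log (2 / δ) := log_pos ((lt_div_iff₀ hδ0).2 (by linarith))
  have hθ0 : 0 < θ := hθ ▸ by positivity
  have hc : 0 < 1 + θ * N := by positivity
  have harg : 0 ≤ θ * N * p * (1 - p) := by
    have : 0 < 1 - p := by linarith
    positivity
  have hLm : L = massartRoot θ N p := by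
    rw [hL, massartRoot, show 2 * (k : ℝ) / N = 2 * p by ring,
      show 4 * θ * (k : ℝ) = 4 * θ * N * p by simp only [p]; field_simp]
  have hLp : L < p := hLm ▸ massartRoot_lt hp0 harg hc
  refine ⟨hLp, fun hL0 => ?_⟩
  have hkey := massartRoot_sub_sq hc.ne' (by linarith : 0 ≤ 1 + 4 * θ * N * p * (1 - p))
  rw [← hLm, hθ] at hkey
  field_simp at hkey
  rw [show (k : ℝ) / (3 * N) = p / 3 by ring, ← inv_div 2 δ]
  refine exp_neg_div_of_eq_log_mul (by positivity) ?_ (by linear_combination hkey / 9)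
  have : 0 < 2 / 3 * L + p / 3 := by linarith
  have : 0 < 1 - 2 / 3 * L - p / 3 := by linarith
  positivity

/-- `ℒ(k)` lies below `k/N`, and when `0 < ℒ(k)` it is a root of the Massart-bound
equation `exp(-N(x - k/N)²/(2((2/3)x + k/(3N))(1 - (2/3)x - k/(3N)))) = δ/2`. -/
theorem L_root_of_massart_equation
    (N : ℕ) (hN : 0 < N) (δ : ℝ) (hδ : δ ∈ Set.Ioo (0:ℝ) 1)
    (k : ℕ) (hk0 : 0 < k) (hkN : k < N)
    (θ : ℝ) (hθ : θ = 9 / (8 * Real.log (2 / δ)))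
    (L : ℝ)
    (hL : L = (k : ℝ) / N +
      3 / 4 * ((1 - 2 * k / N - Real.sqrt (1 + 4 * θ * k * (1 - (k : ℝ) / N))) / (1 + θ * N))) :
    L < (k : ℝ) / N ∧
      (0 < L →
        Real.exp (- (N * (L - (k : ℝ) / N) ^ 2) /
          (2 * (2 / 3 * L + k / (3 * N)) * (1 - 2 / 3 * L - k / (3 * N)))) = δ / 2) :=
  L_root_of_massart_equation_general N δ hδ k hk0 hkN θ hθ L hL
end

section
/- Let N be a positive integer and δ ∈ (0,1). For each integer 0 ≤ k ≤ N define the Clopper–Pearson limits L(k) and U(k) by: L(0) = 0, and for k > 0, L(k) is the unique p̲ ∈ (0,1) with ∑_{j=0}^{k−1} C(N,j) p̲^j (1−p̲)^(N−j) = 1 − δ/2; U(N) = 1, and for k < N, U(k) is the unique p̄ ∈ (0,1) with ∑_{j=0}^{k} C(N,j) p̄^j (1−p̄)^(N−j) = δ/2. Then for every p ∈ (0,1), ∑_{k=0}^{N} [L(k) ≤ p and p ≤ U(k)] · C(N,k) p^k (1−p)^(N−k) > 1 − δ. -/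
/-!
The distribution function `F_m(x) = ∑_{j<m} C(N,j) x^j (1-x)^(N-j)` of `Bin(N, x)` is strictly
decreasing on `[0,1]` for `0 < m ≤ N`: in the Bernstein basis its derivative telescopes to
`-N C(N-1,m-1) x^(m-1) (1-x)^(N-m)`. If `k₀` is the least `k` with `p < L(k)`, the outcomes with
`p < L(k)` all lie in `[k₀, N]`, whose mass is `1 - F_{k₀}(p) < 1 - F_{k₀}(L(k₀)) = δ/2`.
Symmetrically, with `k₁` the largest `k` with `U(k) < p`, the outcomes with `U(k) < p` have mass
at most `F_{k₁+1}(p) < F_{k₁+1}(U(k₁)) = δ/2`. A union bound gives coverage `> 1 - δ`.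
-/

open Finset Polynomial

namespace bernsteinPolynomial

theorem eval_eq (R : Type*) [CommRing R] (n ν : ℕ) (x : R) :
    (bernsteinPolynomial R n ν).eval x = n.choose ν * x ^ ν * (1 - x) ^ (n - ν) := by
  simp [bernsteinPolynomial]

theorem eval_pos {n ν : ℕ} (h : ν ≤ n) {x : ℝ} (hx : x ∈ Set.Ioo (0 : ℝ) 1) :
    0 < (bernsteinPolynomial ℝ n ν).eval x := by
  have hchoose := Nat.choose_pos h
  have hx₀ := hx.1
  have hx₁ := sub_pos.2 hx.2
  rw [eval_eq]
  positivity

theorem derivative_sum_range_succ (R : Type*) [CommRing R] (n m : ℕ) :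
    derivative (∑ ν ∈ range (m + 1), bernsteinPolynomial R (n + 1) ν) =
      -((n + 1 : ℕ) : R[X]) * bernsteinPolynomial R n m := by
  induction m with
  | zero => simp [derivative_zero]
  | succ m ih =>
    rw [sum_range_succ, derivative_add, ih, derivative_succ_aux]
    push_cast
    ring

end bernsteinPolynomial

theorem binomial_term_nonneg (N k : ℕ) {p : ℝ} (hp : p ∈ Set.Icc (0 : ℝ) 1) :
    0 ≤ (N.choose k : ℝ) * p ^ k * (1 - p) ^ (N - k) :=
  mul_nonneg (mul_nonneg (Nat.cast_nonneg _) (pow_nonneg hp.1 _)) (pow_nonneg (sub_nonneg.2 hp.2) _)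

theorem sum_binomial_term_eq_one (N : ℕ) (p : ℝ) :
    ∑ k ∈ range (N + 1), (N.choose k : ℝ) * p ^ k * (1 - p) ^ (N - k) = 1 := by
  simpa [bernsteinPolynomial.eval_eq, eval_finsetSum] using
    congrArg (eval p) (bernsteinPolynomial.sum ℝ N)

theorem strictAntiOn_binomial_cdf {N m : ℕ} (hm : 0 < m) (hmN : m ≤ N) :
    StrictAntiOn (fun x : ℝ => ∑ j ∈ range m, (N.choose j : ℝ) * x ^ j * (1 - x) ^ (N - j))
      (Set.Icc 0 1) := by
  obtain ⟨m, rfl⟩ := Nat.exists_eq_add_one_of_ne_zero hm.ne'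
  obtain ⟨n, rfl⟩ := Nat.exists_eq_add_one_of_ne_zero (by omega : N ≠ 0)
  simp_rw [← bernsteinPolynomial.eval_eq, ← eval_finsetSum]
  refine strictAntiOn_of_deriv_neg (convex_Icc 0 1) (Polynomial.continuousOn _) fun x hx => ?_
  rw [interior_Icc] at hx
  rw [Polynomial.deriv, bernsteinPolynomial.derivative_sum_range_succ, eval_mul, eval_neg,
    eval_natCast, neg_mul, neg_lt_zero]
  exact mul_pos (by positivity) (bernsteinPolynomial.eval_pos (by omega) hx)

section Tails

variable {N : ℕ} {c p : ℝ}

theorem sum_filter_lt_lower_limit_lt {L : ℕ → ℝ} (hc : c < 1) (hL0 : L 0 = 0)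
    (hL : ∀ k, 0 < k → k ≤ N → L k ∈ Set.Icc (0 : ℝ) 1 ∧
      ∑ j ∈ range k, (N.choose j : ℝ) * L k ^ j * (1 - L k) ^ (N - j) = c)
    (hp : p ∈ Set.Icc (0 : ℝ) 1) :
    ∑ k ∈ range (N + 1) with p < L k, (N.choose k : ℝ) * p ^ k * (1 - p) ^ (N - k) < 1 - c := by
  set s := {k ∈ range (N + 1) | p < L k}
  rcases s.eq_empty_or_nonempty with hs | hs
  · simpa [hs] using hc
  have hk₀ := mem_filter.1 (s.min'_mem hs)
  set k₀ := s.min' hs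
  have hk₀_pos : 0 < k₀ := Nat.pos_of_ne_zero fun h => by
    rw [h, hL0] at hk₀
    exact (hk₀.2.trans_le hp.1).false
  have hk₀N : k₀ ≤ N := Nat.lt_succ_iff.1 (mem_range.1 hk₀.1)
  obtain ⟨hLk₀, hFk₀⟩ := hL k₀ hk₀_pos hk₀N
  calc ∑ k ∈ s, (N.choose k : ℝ) * p ^ k * (1 - p) ^ (N - k)
      ≤ ∑ k ∈ Ico k₀ (N + 1), (N.choose k : ℝ) * p ^ k * (1 - p) ^ (N - k) :=
        sum_le_sum_of_subset_of_nonneg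
          (fun k hk => mem_Ico.2 ⟨s.min'_le k hk, mem_range.1 (mem_filter.1 hk).1⟩)
          (fun k _ _ => binomial_term_nonneg N k hp)
    _ = 1 - ∑ j ∈ range k₀, (N.choose j : ℝ) * p ^ j * (1 - p) ^ (N - j) := by
        rw [eq_sub_iff_add_eq', sum_range_add_sum_Ico _ (by omega), sum_binomial_term_eq_one]
    _ < 1 - c := by
        linarith [strictAntiOn_binomial_cdf hk₀_pos hk₀N hp hLk₀ hk₀.2]

theorem sum_filter_upper_limit_lt_lt {U : ℕ → ℝ} (hc : 0 < c) (hUN : U N = 1)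
    (hU : ∀ k, k < N → U k ∈ Set.Icc (0 : ℝ) 1 ∧
      ∑ j ∈ range (k + 1), (N.choose j : ℝ) * U k ^ j * (1 - U k) ^ (N - j) = c)
    (hp : p ∈ Set.Icc (0 : ℝ) 1) :
    ∑ k ∈ range (N + 1) with U k < p, (N.choose k : ℝ) * p ^ k * (1 - p) ^ (N - k) < c := by
  set s := {k ∈ range (N + 1) | U k < p}
  rcases s.eq_empty_or_nonempty with hs | hs
  · simpa [hs] using hc
  have hk₁ := mem_filter.1 (s.max'_mem hs)
  set k₁ := s.max' hs
  have hk₁N : k₁ < N := by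
    refine lt_of_le_of_ne (Nat.lt_succ_iff.1 (mem_range.1 hk₁.1)) fun h => ?_
    rw [h, hUN] at hk₁
    exact (hk₁.2.trans_le hp.2).false
  obtain ⟨hUk₁, hFk₁⟩ := hU k₁ hk₁N
  calc ∑ k ∈ s, (N.choose k : ℝ) * p ^ k * (1 - p) ^ (N - k)
      ≤ ∑ j ∈ range (k₁ + 1), (N.choose j : ℝ) * p ^ j * (1 - p) ^ (N - j) :=
        sum_le_sum_of_subset_of_nonneg
          (fun k hk => mem_range.2 (Nat.lt_succ_of_le (s.le_max' k hk)))
          (fun k _ _ => binomial_term_nonneg N k hp)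
    _ < c := hFk₁ ▸ strictAntiOn_binomial_cdf k₁.succ_pos hk₁N hUk₁ hp hk₁.2

end Tails

theorem sum_sub_sum_filter_not_sub_sum_filter_not_le {ι : Type*} (s : Finset ι) {f : ι → ℝ}
    (hf : ∀ i ∈ s, 0 ≤ f i) (P Q : ι → Prop) [DecidablePred P] [DecidablePred Q] :
    ∑ i ∈ s, f i - ∑ i ∈ s with ¬P i, f i - ∑ i ∈ s with ¬Q i, f i ≤
      ∑ i ∈ s, if P i ∧ Q i then f i else 0 := by
  rw [sum_filter, sum_filter, ← sum_sub_distrib, ← sum_sub_distrib]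
  refine sum_le_sum fun i hi => ?_
  have := hf i hi
  split_ifs <;> first | linarith | tauto

theorem clopper_pearson_coverage_general
    (N : ℕ) (δ : ℝ) (hδ : δ ∈ Set.Ioo (0:ℝ) 1)
    (L U : ℕ → ℝ)
    (hL0 : L 0 = 0)
    (hL : ∀ k, 0 < k → k ≤ N → L k ∈ Set.Ioo (0:ℝ) 1 ∧
      ∑ j ∈ Finset.range k, (N.choose j : ℝ) * (L k) ^ j * (1 - L k) ^ (N - j) = 1 - δ / 2)
    (hUN : U N = 1)
    (hU : ∀ k, k < N → U k ∈ Set.Ioo (0:ℝ) 1 ∧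
      ∑ j ∈ Finset.range (k + 1), (N.choose j : ℝ) * (U k) ^ j * (1 - U k) ^ (N - j) = δ / 2)
    (p : ℝ) (hp : p ∈ Set.Ioo (0:ℝ) 1) :
    1 - δ < ∑ k ∈ Finset.range (N + 1),
      (if L k ≤ p ∧ p ≤ U k then (N.choose k : ℝ) * p ^ k * (1 - p) ^ (N - k) else 0) := by
  have hp' := Set.Ioo_subset_Icc_self hp
  have hlower := sum_filter_lt_lower_limit_lt (by linarith [hδ.1]) hL0
    (fun k hk hkN => (hL k hk hkN).imp_left fun h => Set.Ioo_subset_Icc_self h) hp'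
  have hupper := sum_filter_upper_limit_lt_lt (by linarith [hδ.1]) hUN
    (fun k hk => (hU k hk).imp_left fun h => Set.Ioo_subset_Icc_self h) hp'
  have hunion := sum_sub_sum_filter_not_sub_sum_filter_not_le (range (N + 1))
    (fun k _ => binomial_term_nonneg N k hp') (fun k => L k ≤ p) (fun k => p ≤ U k)
  simp only [not_le, sum_binomial_term_eq_one] at hunion
  linarith

/-- The Clopper–Pearson confidence interval `[L(K), U(K)]` has coverage probability
exceeding `1 - δ` for every `p ∈ (0,1)`. -/
theorem clopper_pearson_coverage
    (N : ℕ) (hN : 0 < N) (δ : ℝ) (hδ : δ ∈ Set.Ioo (0:ℝ) 1)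
    (L U : ℕ → ℝ)
    (hL0 : L 0 = 0)
    (hL : ∀ k, 0 < k → k ≤ N → L k ∈ Set.Ioo (0:ℝ) 1 ∧
      ∑ j ∈ Finset.range k, (N.choose j : ℝ) * (L k) ^ j * (1 - L k) ^ (N - j) = 1 - δ / 2)
    (hUN : U N = 1)
    (hU : ∀ k, k < N → U k ∈ Set.Ioo (0:ℝ) 1 ∧
      ∑ j ∈ Finset.range (k + 1), (N.choose j : ℝ) * (U k) ^ j * (1 - U k) ^ (N - j) = δ / 2)
    (p : ℝ) (hp : p ∈ Set.Ioo (0:ℝ) 1) :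
    1 - δ < ∑ k ∈ Finset.range (N + 1),
      (if L k ≤ p ∧ p ≤ U k then (N.choose k : ℝ) * p ^ k * (1 - p) ^ (N - k) else 0) :=
  clopper_pearson_coverage_general N δ hδ L U hL0 hL hUN hU p hp
end
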